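/- For every k ∈ {1,…,n} one has C(λ_k) = (|g| · A′(λ_k)/m) · Σ_{j=1}^{n} Q̃_{(0,j),(m−1,k)}, where Q̃_{(0,j),(m−1,k)} denotes the entry of Q̃ in row (0,j) and column (m−1,k). In particular, if |g| ≠ 0, then C(λ_k)/(|g|·A′(λ_k)) = (1/m)·Σ_{j=1}^{n} Q̃_{(0,j),(m−1,k)}. -/

import Mathlib

open Matrix BigOperators

noncomputable section

/-- The block matrix `L̃` with diagonal blocks `Λ = diag(λ₁,…,λₙ)` at positions `(h, h+1)`:
its entry in row `(h,j)` and column `(i,k)` is `λⱼ` if `k = j` and `i = h + 1` in `ℤ/mℤ`,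
and `0` otherwise. -/
def Ltilde (m n : ℕ) (lam : Fin n → ℂ) :
    Matrix (ZMod m × Fin n) (ZMod m × Fin n) ℂ :=
  Matrix.of fun p q => if q.2 = p.2 ∧ q.1 = p.1 + 1 then lam p.2 else 0

/-- `|g| = g₀ + g₁ + ⋯ + g_{m-1}`. -/
def gAbs (m : ℕ) (g : ZMod m → ℂ) : ℂ :=
  ∑ s ∈ Finset.range m, g (s : ZMod m)

/-- `cᵢ = Σ_{r=0}^{i} g_r − Σ_{s=0}^{m−1} ((m−s)/m)·g_s`, the index `i` read modulo `m`. -/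
def cConst (m : ℕ) (g : ZMod m → ℂ) (i : ZMod m) : ℂ :=
  (∑ r ∈ Finset.range (i.val + 1), g (r : ZMod m)) -
    ∑ s ∈ Finset.range m, (((m : ℂ) - (s : ℂ)) / (m : ℂ)) * g (s : ZMod m)

/-- The (spinless) matrix `Q̃`: its entry in row `(h,j)` and column `(i,k)` vanishes unless
`h = i + 1` in `ℤ/mℤ`, in which case it equals `φⱼ + cᵢ/λⱼ` if `k = j`, and
`−|g|·λⱼ^{m−i−1}·λₖ^{i}/(λⱼ^m − λₖ^m)` if `k ≠ j` (where `i` is taken as its representative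
in `{0,…,m−1}`). -/
def Qtilde (m n : ℕ) (g : ZMod m → ℂ) (lam phi : Fin n → ℂ) :
    Matrix (ZMod m × Fin n) (ZMod m × Fin n) ℂ :=
  Matrix.of fun p q =>
    if p.1 = q.1 + 1 then
      if q.2 = p.2 then phi p.2 + cConst m g q.1 / lam p.2
      else -(gAbs m g) * lam p.2 ^ (m - q.1.val - 1) * lam q.2 ^ q.1.val /
        (lam p.2 ^ m - lam q.2 ^ m)
    else 0

/-- `A(z) = det(z·1 − L̃)`. -/
def Afun (m n : ℕ) [NeZero m] (lam : Fin n → ℂ) (z : ℂ) : ℂ :=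
  (z • (1 : Matrix (ZMod m × Fin n) (ZMod m × Fin n) ℂ) - Ltilde m n lam).det

/-- `D(z) = tr(Q̃ · adj(z·1 − L̃))`. -/
def Dfun (m n : ℕ) [NeZero m] (g : ZMod m → ℂ) (lam phi : Fin n → ℂ) (z : ℂ) : ℂ :=
  Matrix.trace (Qtilde m n g lam phi *
    (z • (1 : Matrix (ZMod m × Fin n) (ZMod m × Fin n) ℂ) - Ltilde m n lam).adjugate)

/-- `C(z) = w̃ · Q̃ · adj(z·1 − L̃) · ṽ`, where `ṽ` has entry `1` at each index `(0,j)` and `0`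
elsewhere, and `w̃` has entry `|g|` at each index `(0,j)` and `0` elsewhere. -/
def Cfun (m n : ℕ) [NeZero m] (g : ZMod m → ℂ) (lam phi : Fin n → ℂ) (z : ℂ) : ℂ :=
  (fun p : ZMod m × Fin n => if p.1 = 0 then gAbs m g else 0) ⬝ᵥ
    ((Qtilde m n g lam phi *
        (z • (1 : Matrix (ZMod m × Fin n) (ZMod m × Fin n) ℂ) - Ltilde m n lam).adjugate) *ᵥ
      fun p : ZMod m × Fin n => if p.1 = 0 then (1 : ℂ) else 0)

/-!
`L̃` is block diagonal with one cyclic-shift block `S(λⱼ)` per `j`. For a single block,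
`(z - S(a)) · K(z, a) = (zᵐ - aᵐ) · 1` for the explicit matrix `K` with entries `z^(m-1-r) a^r`,
`r = i - h`, and `det (z - S(a)) = zᵐ - aᵐ`. Hence `A(z) = ∏ⱼ (zᵐ - λⱼᵐ)` and
`adj (z - L̃) = blockdiag (∏_{l ≠ j} (zᵐ - λₗᵐ) · K(z, λⱼ))` for every `z`, including the
eigenvalues. At `z = λₖ` only the `k`-th block survives, and there `K(λₖ, λₖ)` is the constant
matrix `λₖ^(m-1)`; as `ṽ`, `w̃` are supported on the `h = 0` rows and `Q̃` maps the `h = m - 1`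
columns to them, `C(λₖ) = |g| c Σⱼ Q̃_{(0,j),(m-1,k)}` and `A'(λₖ) = m c` with
`c = λₖ^(m-1) ∏_{l ≠ k} (λₖᵐ - λₗᵐ)`.
-/

theorem ZMod.val_sub_one_of_ne_zero {m : ℕ} [NeZero m] {x : ZMod m} (hx : x ≠ 0) :
    (x - 1).val = x.val - 1 := by
  have hm : m ≠ 1 := by rintro rfl; exact hx (Subsingleton.elim _ _)
  rw [ZMod.val_sub, ZMod.val_one'' hm]
  rwa [ZMod.val_one'' hm, Nat.one_le_iff_ne_zero, ZMod.val_ne_zero]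

theorem ZMod.sign_subRight_one (m : ℕ) [NeZero m] :
    Equiv.Perm.sign (Equiv.subRight (1 : ZMod m)) = -(-1) ^ m := by
  obtain ⟨m, rfl⟩ : ∃ k, m = k + 1 := Nat.exists_eq_succ_of_ne_zero (NeZero.ne m)
  have h : Equiv.subRight (1 : Fin (m + 1)) = (finRotate (m + 1))⁻¹ := by
    rw [eq_inv_iff_mul_eq_one]
    ext i
    simp [finRotate_apply]
  change Equiv.Perm.sign (Equiv.subRight (1 : Fin (m + 1))) = _
  rw [h, Equiv.Perm.sign_inv, sign_finRotate]
  simp [pow_succ]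

theorem Equiv.Perm.eq_one_or_eq_subRight_one {m : ℕ} [NeZero m] (σ : Equiv.Perm (ZMod m))
    (hσ : ∀ i, σ i = i ∨ σ i = i - 1) : σ = 1 ∨ σ = Equiv.subRight 1 := by
  by_cases hfix : ∃ i₀, σ i₀ = i₀
  · obtain ⟨i₀, hi₀⟩ := hfix
    -- a fixed point propagates forward: `σ (y + 1) = y = σ y` would force `y + 1 = y`
    have hfixed : ∀ k : ℕ, σ (i₀ + k) = i₀ + k := by
      intro k
      induction k with
      | zero => simpa using hi₀
      | succ k ih =>
        push_cast
        rw [← add_assoc]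
        rcases hσ (i₀ + k + 1) with h | h
        · exact h
        · have hsucc : i₀ + k + 1 = i₀ + k := σ.injective (by rw [h, add_sub_cancel_right, ih])
          rw [hsucc, ih]
    left
    ext i
    simpa using hfixed (i - i₀).val
  · push Not at hfix
    right
    ext i
    exact (hσ i).resolve_left (hfix i)

namespace Matrix

theorem dotProduct_mulVec_fst_eq {R α β : Type*} [CommSemiring R] [Fintype α] [Fintype β]
    [DecidableEq α] (M : Matrix (α × β) (α × β) R) (a : α) (c d : R) :
    (fun p : α × β => if p.1 = a then c else 0) ⬝ᵥ (M *ᵥ fun p => if p.1 = a then d else 0) =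
      c * d * ∑ j, ∑ k, M (a, j) (a, k) := by
  rw [dotProduct, Fintype.sum_prod_type, Finset.sum_eq_single a (fun b _ hb => by simp [hb])
    (by simp), Finset.mul_sum]
  refine Finset.sum_congr rfl fun j _ => ?_
  rw [mulVec, dotProduct, Fintype.sum_prod_type, Finset.sum_eq_single a (fun b _ hb => by simp [hb])
    (by simp), if_pos rfl, Finset.mul_sum, Finset.mul_sum]
  exact Finset.sum_congr rfl fun k _ => by rw [if_pos rfl]; ring

theorem mul_blockDiagonal_apply {R α β γ o : Type*} [NonUnitalNonAssocSemiring R] [Fintype α]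
    [Fintype o] [DecidableEq o] (M : Matrix β (α × o) R) (N : o → Matrix α γ R) (p : β)
    (i : γ) (k : o) : (M * blockDiagonal N) p (i, k) = ∑ h, M p (h, k) * N k h i := by
  simp [mul_apply, Fintype.sum_prod_type, blockDiagonal_apply, mul_ite]

variable {R : Type*} [CommRing R] {m : ℕ}

theorem adjugate_eq_of_mul_eq_det_smul {n : Type*} [Fintype n] [DecidableEq n] [IsDomain R]
    {A B : Matrix n n R} (hdet : A.det ≠ 0) (h : A * B = A.det • 1) : A.adjugate = B := by
  refine smul_right_injective _ hdet ?_
  calc A.det • A.adjugate = A.adjugate * (A * B) := by rw [h, Matrix.mul_smul, Matrix.mul_one]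
    _ = A.det • B := by rw [← Matrix.mul_assoc, adjugate_mul, smul_mul, one_mul]

def cyclicShift (m : ℕ) (a : R) : Matrix (ZMod m) (ZMod m) R :=
  of fun h i => if i = h + 1 then a else 0

/-- The adjugate of `z • 1 - cyclicShift m a`. -/
def cyclicShiftAdj (m : ℕ) (z a : R) : Matrix (ZMod m) (ZMod m) R :=
  of fun h i => z ^ (m - 1 - (i - h).val) * a ^ (i - h).val

theorem smul_one_sub_cyclicShift_apply (z a : R) (h i : ZMod m) :
    (z • 1 - cyclicShift m a) h i = (if h = i then z else 0) - (if i = h + 1 then a else 0) := by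
  simp [cyclicShift, one_apply]

theorem det_smul_one_sub_cyclicShift [NeZero m] (z a : R) :
    det (z • 1 - cyclicShift m a) = z ^ m - a ^ m := by
  rcases eq_or_ne m 1 with rfl | hm
  · rw [det_unique, smul_one_sub_cyclicShift_apply, if_pos rfl, if_pos (Subsingleton.elim _ _)]
    simp
  have : Fact (1 < m) := ⟨by have := NeZero.ne m; omega⟩
  have self_ne_add_one : ∀ i : ZMod m, i ≠ i + 1 := fun i h =>
    one_ne_zero (by linear_combination -h)
  have sub_one_ne_self : ∀ i : ZMod m, i - 1 ≠ i := fun i h =>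
    one_ne_zero (by linear_combination -h)
  set τ : Equiv.Perm (ZMod m) := Equiv.subRight 1
  have hτ : (1 : Equiv.Perm (ZMod m)) ≠ τ := fun h => self_ne_add_one 0 (by
    simpa [τ] using (congrArg (· 1) h).symm)
  -- in the Leibniz expansion only the identity and the cyclic shift `τ` give nonzero terms
  have hzero : ∀ σ ∈ Finset.univ, σ ∉ ({1, τ} : Finset _) →
      Equiv.Perm.sign σ • ∏ i, (z • 1 - cyclicShift m a) (σ i) i = 0 := by
    intro σ _ hσ
    simp only [Finset.mem_insert, Finset.mem_singleton, not_or] at hσ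
    obtain ⟨i, hi⟩ : ∃ i, σ i ≠ i ∧ σ i ≠ i - 1 := by
      by_contra! h
      exact (Equiv.Perm.eq_one_or_eq_subRight_one σ fun i => or_iff_not_imp_left.mpr (h i)).elim
        hσ.1 hσ.2
    refine smul_eq_zero_of_right _ (Finset.prod_eq_zero (Finset.mem_univ i) ?_)
    rw [smul_one_sub_cyclicShift_apply, if_neg hi.1,
      if_neg fun h => hi.2 (eq_sub_of_add_eq h.symm), sub_zero]
  rw [det_apply, ← Finset.sum_subset (Finset.subset_univ _) hzero, Finset.sum_pair hτ]
  simp only [smul_one_sub_cyclicShift_apply, Equiv.Perm.one_apply, if_neg (self_ne_add_one _),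
    Equiv.Perm.sign_one, one_smul, sub_zero, Finset.prod_const, Finset.card_univ, ZMod.card, τ,
    ZMod.sign_subRight_one, Equiv.subRight_apply, sub_add_cancel, if_true,
    if_neg (sub_one_ne_self _), zero_sub, Units.smul_def, neg_pow a]
  push_cast
  have hsq : ((-1 : R) ^ m) * (-1) ^ m = 1 := by rw [← mul_pow]; norm_num
  linear_combination (-a ^ m) * hsq

theorem smul_one_sub_cyclicShift_mul_adj [NeZero m] (z a : R) :
    (z • 1 - cyclicShift m a) * cyclicShiftAdj m z a = (z ^ m - a ^ m) • 1 := by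
  obtain ⟨m, rfl⟩ : ∃ k, m = k + 1 := Nat.exists_eq_succ_of_ne_zero (NeZero.ne m)
  ext h i
  simp only [mul_apply, smul_one_sub_cyclicShift_apply, sub_mul, ite_mul, zero_mul,
    Finset.sum_sub_distrib, Finset.sum_ite_eq, Finset.sum_ite_eq', Finset.mem_univ, if_true,
    smul_apply, one_apply, smul_eq_mul, cyclicShiftAdj, of_apply, add_tsub_cancel_right]
  by_cases hhi : h = i
  · subst hhi
    rw [if_pos rfl, sub_self, show h - (h + 1) = -1 by ring, ZMod.val_zero, ZMod.val_neg_one,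
      Nat.sub_zero, Nat.sub_self]
    ring
  · have hdiff : i - h ≠ 0 := sub_ne_zero.mpr (Ne.symm hhi)
    have hlt : (i - h).val < m + 1 := ZMod.val_lt _
    rw [if_neg hhi, show i - (h + 1) = i - h - 1 by ring, ZMod.val_sub_one_of_ne_zero hdiff]
    obtain ⟨s, hs⟩ : ∃ s, (i - h).val = s + 1 :=
      Nat.exists_eq_succ_of_ne_zero ((ZMod.val_ne_zero _).mpr hdiff)
    rw [hs, add_tsub_cancel_right, show m - s = m - (s + 1) + 1 by omega]
    ring

theorem cyclicShiftAdj_self [NeZero m] (a : R) (h i : ZMod m) :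
    cyclicShiftAdj m a a h i = a ^ (m - 1) := by
  rw [cyclicShiftAdj, of_apply, ← pow_add, Nat.sub_add_cancel]
  have := ZMod.val_lt (i - h)
  omega

variable {ι : Type*} [DecidableEq ι]

def blockCyclicShift (m : ℕ) (a : ι → R) : Matrix (ZMod m × ι) (ZMod m × ι) R :=
  blockDiagonal fun j => cyclicShift m (a j)

def blockCyclicShiftAdj [Fintype ι] (m : ℕ) (z : R) (a : ι → R) :
    Matrix (ZMod m × ι) (ZMod m × ι) R :=
  blockDiagonal fun j => (∏ l ∈ Finset.univ.erase j, (z ^ m - a l ^ m)) • cyclicShiftAdj m z (a j)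

theorem smul_one_sub_blockCyclicShift (z : R) (a : ι → R) :
    z • 1 - blockCyclicShift m a = blockDiagonal fun j => z • 1 - cyclicShift m (a j) := by
  rw [blockCyclicShift, ← blockDiagonal_one, ← blockDiagonal_smul, ← blockDiagonal_sub]
  rfl

theorem det_smul_one_sub_blockCyclicShift [NeZero m] [Fintype ι] (z : R) (a : ι → R) :
    det (z • 1 - blockCyclicShift m a) = ∏ j, (z ^ m - a j ^ m) := by
  simp only [smul_one_sub_blockCyclicShift, det_blockDiagonal, det_smul_one_sub_cyclicShift]

theorem smul_one_sub_blockCyclicShift_mul_adj [NeZero m] [Fintype ι] (z : R) (a : ι → R) :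
    (z • 1 - blockCyclicShift m a) * blockCyclicShiftAdj m z a =
      det (z • 1 - blockCyclicShift m a) • 1 := by
  have hblock : ∀ j, (z • 1 - cyclicShift m (a j)) *
      ((∏ l ∈ Finset.univ.erase j, (z ^ m - a l ^ m)) • cyclicShiftAdj m z (a j)) =
        (∏ l, (z ^ m - a l ^ m)) • 1 := fun j => by
    rw [Matrix.mul_smul, smul_one_sub_cyclicShift_mul_adj, smul_smul,
      Finset.prod_erase_mul _ _ (Finset.mem_univ j)]
  rw [smul_one_sub_blockCyclicShift, blockCyclicShiftAdj, ← blockDiagonal_mul,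
    funext hblock, det_blockDiagonal]
  simp only [det_smul_one_sub_cyclicShift]
  rw [← blockDiagonal_one, ← blockDiagonal_smul]
  rfl

theorem blockCyclicShift_map {S : Type*} [CommRing S] (f : R →+* S) (a : ι → R) :
    (blockCyclicShift m a).map f = blockCyclicShift m (f ∘ a) := by
  ext ⟨h, j⟩ ⟨i, k⟩
  simp [blockCyclicShift, blockDiagonal_apply, cyclicShift, apply_ite f]

theorem blockCyclicShiftAdj_map {S : Type*} [Fintype ι] [CommRing S] (f : R →+* S) (z : R)
    (a : ι → R) : (blockCyclicShiftAdj m z a).map f = blockCyclicShiftAdj m (f z) (f ∘ a) := by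
  ext ⟨h, j⟩ ⟨i, k⟩
  simp [blockCyclicShiftAdj, blockDiagonal_apply, cyclicShiftAdj, apply_ite f, map_prod]

open Polynomial in
/-- Valid also where `z • 1 - blockCyclicShift m a` is singular: over `R[X]` the determinant is a
nonzero monic polynomial, which pins down the adjugate, and evaluation at `z` commutes with
`adjugate`. -/
theorem adjugate_smul_one_sub_blockCyclicShift [IsDomain R] [Fintype ι] [NeZero m] (z : R)
    (a : ι → R) : adjugate (z • 1 - blockCyclicShift m a) = blockCyclicShiftAdj m z a := by
  have hgeneric : adjugate ((X : R[X]) • 1 - blockCyclicShift m (C ∘ a)) =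
      blockCyclicShiftAdj m X (C ∘ a) := by
    refine adjugate_eq_of_mul_eq_det_smul ?_ (smul_one_sub_blockCyclicShift_mul_adj _ _)
    rw [det_smul_one_sub_blockCyclicShift]
    exact (monic_prod_of_monic _ _ fun j _ => by
      rw [Function.comp_apply, ← C_pow]; exact monic_X_pow_sub_C _ (NeZero.ne m)).ne_zero
  have hz : (evalRingHom z).mapMatrix ((X : R[X]) • 1 - blockCyclicShift m (C ∘ a)) =
      z • 1 - blockCyclicShift m a := by
    rw [map_sub, RingHom.mapMatrix_apply, RingHom.mapMatrix_apply, blockCyclicShift_map]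
    ext p q
    simp [one_apply, apply_ite, Function.comp_def]
  have := congrArg (evalRingHom z).mapMatrix hgeneric
  rw [RingHom.map_adjugate, hz, RingHom.mapMatrix_apply, blockCyclicShiftAdj_map, coe_evalRingHom,
    eval_X] at this
  simpa only [Function.comp_def, eval_C] using this

end Matrix

section

variable {m n : ℕ}

theorem Ltilde_eq_blockCyclicShift (lam : Fin n → ℂ) :
    Ltilde m n lam = blockCyclicShift m lam := by
  ext ⟨h, j⟩ ⟨i, k⟩
  simp only [Ltilde, blockCyclicShift, cyclicShift, of_apply, blockDiagonal_apply]
  by_cases hjk : j = k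
  · subst hjk; simp
  · simp [hjk, Ne.symm hjk]

theorem Afun_eq_prod [NeZero m] (lam : Fin n → ℂ) (z : ℂ) :
    Afun m n lam z = ∏ j, (z ^ m - lam j ^ m) := by
  rw [Afun, Ltilde_eq_blockCyclicShift, det_smul_one_sub_blockCyclicShift]

theorem deriv_Afun_eigenvalue_eq [NeZero m] (lam : Fin n → ℂ) (k : Fin n) :
    deriv (Afun m n lam) (lam k) =
      m * (lam k ^ (m - 1) * ∏ l ∈ Finset.univ.erase k, (lam k ^ m - lam l ^ m)) := by
  have hA : Afun m n lam =
      fun z => (z ^ m - lam k ^ m) * ∏ l ∈ Finset.univ.erase k, (z ^ m - lam l ^ m) :=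
    funext fun z => by
      rw [Afun_eq_prod]; exact (Finset.mul_prod_erase _ _ (Finset.mem_univ k)).symm
  rw [hA, deriv_fun_mul (by fun_prop) (by fun_prop), sub_self, zero_mul, add_zero,
    deriv_sub_const, deriv_pow_field]
  ring

theorem Qtilde_apply_of_ne (g : ZMod m → ℂ) (lam phi : Fin n → ℂ) {h i : ZMod m}
    (hhi : h ≠ i + 1) (j k : Fin n) : Qtilde m n g lam phi (h, j) (i, k) = 0 :=
  if_neg hhi

theorem Cfun_eigenvalue_eq [NeZero m] (g : ZMod m → ℂ) (lam phi : Fin n → ℂ) (k : Fin n) :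
    Cfun m n g lam phi (lam k) = gAbs m g *
      (lam k ^ (m - 1) * ∏ l ∈ Finset.univ.erase k, (lam k ^ m - lam l ^ m)) *
        ∑ j, Qtilde m n g lam phi (0, j) (-1, k) := by
  rw [Cfun, Ltilde_eq_blockCyclicShift, adjugate_smul_one_sub_blockCyclicShift,
    dotProduct_mulVec_fst_eq, mul_one, mul_assoc, Finset.mul_sum Finset.univ _ (_ * _)]
  congr 1
  refine Finset.sum_congr rfl fun j _ => ?_
  have hentry : ∀ k', (Qtilde m n g lam phi * blockCyclicShiftAdj m (lam k) lam) (0, j) (0, k') =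
      Qtilde m n g lam phi (0, j) (-1, k') *
        ((∏ l ∈ Finset.univ.erase k', (lam k ^ m - lam l ^ m)) *
          cyclicShiftAdj m (lam k) (lam k') (-1) 0) := by
    intro k'
    rw [blockCyclicShiftAdj, mul_blockDiagonal_apply, Finset.sum_eq_single (-1)]
    · rfl
    · intro h _ hh
      rw [Qtilde_apply_of_ne _ _ _ (fun h0 => hh (eq_neg_of_add_eq_zero_left h0.symm)), zero_mul]
    · simp
  rw [Finset.sum_congr rfl fun k' _ => hentry k', Finset.sum_eq_single k, cyclicShiftAdj_self]
  · ring
  · intro k' _ hk'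
    rw [Finset.prod_eq_zero (Finset.mem_erase.mpr ⟨Ne.symm hk', Finset.mem_univ k⟩) (sub_self _),
      zero_mul, mul_zero]
  · simp

end

theorem Cfun_at_eigenvalue_general (m n : ℕ) [NeZero m]
    (lam phi : Fin n → ℂ) (g : ZMod m → ℂ)
    (hlam : ∀ j, lam j ≠ 0)
    (hsep : ∀ j k : Fin n, j ≠ k → lam j ^ m ≠ lam k ^ m) (k : Fin n) :
    Cfun m n g lam phi (lam k) =
      gAbs m g * deriv (Afun m n lam) (lam k) / (m : ℂ) *
        ∑ j : Fin n, Qtilde m n g lam phi (0, j) ((m : ZMod m) - 1, k) ∧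
    (gAbs m g ≠ 0 →
      Cfun m n g lam phi (lam k) / (gAbs m g * deriv (Afun m n lam) (lam k)) =
        (1 / (m : ℂ)) * ∑ j : Fin n, Qtilde m n g lam phi (0, j) ((m : ZMod m) - 1, k)) := by
  have hm : (m : ℂ) ≠ 0 := Nat.cast_ne_zero.mpr (NeZero.ne m)
  rw [ZMod.natCast_self, zero_sub, Cfun_eigenvalue_eq, deriv_Afun_eigenvalue_eq]
  set c := lam k ^ (m - 1) * ∏ l ∈ Finset.univ.erase k, (lam k ^ m - lam l ^ m)
  have hc : c ≠ 0 :=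
    mul_ne_zero (pow_ne_zero _ (hlam k)) (Finset.prod_ne_zero_iff.mpr fun l hl =>
      sub_ne_zero.mpr (hsep k l (Finset.ne_of_mem_erase hl).symm))
  exact ⟨by field_simp, fun hg => by field_simp⟩

/-- For every `k`,
`C(λₖ) = (|g| · A′(λₖ)/m) · Σ_{j} Q̃_{(0,j),(m−1,k)}`; in particular, if `|g| ≠ 0`, then
`C(λₖ)/(|g|·A′(λₖ)) = (1/m)·Σ_{j} Q̃_{(0,j),(m−1,k)}`. -/
theorem Cfun_at_eigenvalue (m n : ℕ) [NeZero m] (hn : 0 < n)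
    (lam phi : Fin n → ℂ) (g : ZMod m → ℂ)
    (hlam : ∀ j, lam j ≠ 0)
    (hsep : ∀ j k : Fin n, j ≠ k → lam j ^ m ≠ lam k ^ m) (k : Fin n) :
    Cfun m n g lam phi (lam k) =
      gAbs m g * deriv (Afun m n lam) (lam k) / (m : ℂ) *
        ∑ j : Fin n, Qtilde m n g lam phi (0, j) ((m : ZMod m) - 1, k) ∧
    (gAbs m g ≠ 0 →
      Cfun m n g lam phi (lam k) / (gAbs m g * deriv (Afun m n lam) (lam k)) =
        (1 / (m : ℂ)) * ∑ j : Fin n, Qtilde m n g lam phi (0, j) ((m : ZMod m) - 1, k)) :=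
  Cfun_at_eigenvalue_general m n lam phi g hlam hsep k
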